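/- arXiv:1208.3582 — 4 statements merged into one kernel-verified Lean document; each statement's English description precedes it below -/
import Mathlib

section
/- If p ∈ ℝ⟨x⟩ satisfies p = ℓ + Σⱼ sⱼ* sⱼ where ℓ is a symmetric polynomial homogeneous of degree one and s₁,…,s_m are polynomials homogeneous of degree one, then p is symmetric, p(0) = 0, and p is quasi-convex: for every positive integer n and every positive definite A ∈ 𝕊ₙ(ℝ), the set {X ∈ 𝕊ₙ(ℝ^g) : A − p(X) is positive definite} is convex. -/
open scoped BigOperators

noncomputable section

/-- Evaluation of a free polynomial `p ∈ ℝ⟨x₁,…,x_g⟩` at a `g`-tuple of square matrices;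
the empty word evaluates to the identity matrix. -/
def evalMat {g : ℕ} {ι : Type} [Fintype ι] [DecidableEq ι]
    (p : FreeAlgebra ℝ (Fin g)) (X : Fin g → Matrix ι ι ℝ) : Matrix ι ι ℝ :=
  FreeAlgebra.lift ℝ X p

/-- `p` is a hermitian sum of squares: `p = Σⱼ hⱼ* hⱼ`. -/
def IsHermitianSOS {g : ℕ} (p : FreeAlgebra ℝ (Fin g)) : Prop :=
  ∃ (m : ℕ) (h : Fin m → FreeAlgebra ℝ (Fin g)), p = ∑ j, star (h j) * h j

/-- `p` is quasi-convex: `p(0) = 0` and for every positive integer `n` and every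
positive definite `A ∈ 𝕊ₙ(ℝ)`, the set `{X ∈ 𝕊ₙ(ℝ^g) : A − p(X) ≻ 0}` is convex. -/
def IsQuasiConvex {g : ℕ} (p : FreeAlgebra ℝ (Fin g)) : Prop :=
  (∀ n : ℕ, evalMat p (fun _ => (0 : Matrix (Fin n) (Fin n) ℝ)) = 0) ∧
  ∀ n : ℕ, 0 < n → ∀ A : Matrix (Fin n) (Fin n) ℝ, A.PosDef →
    Convex ℝ {X : Fin g → Matrix (Fin n) (Fin n) ℝ |
      (∀ j, (X j).IsSymm) ∧ (A - evalMat p X).PosDef}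

/-- The space of free polynomials homogeneous of degree one (linear span of the variables).  -/
def degOne (g : ℕ) : Submodule ℝ (FreeAlgebra ℝ (Fin g)) :=
  Submodule.span ℝ (Set.range (FreeAlgebra.ι ℝ : Fin g → FreeAlgebra ℝ (Fin g)))

/-- The space of free polynomials of degree at most `k`. -/
def degLE (g k : ℕ) : Submodule ℝ (FreeAlgebra ℝ (Fin g)) :=
  ⨆ i ∈ Finset.range (k + 1), (degOne g) ^ i

/-- `M` has a positive eigenvalue (with corresponding eigenvector). -/
def HasPosEigenvalue {n : ℕ} (M : Matrix (Fin n) (Fin n) ℝ) : Prop :=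
  ∃ (lam : ℝ) (v : Fin n → ℝ), 0 < lam ∧ v ≠ 0 ∧ M.mulVec v = lam • v

/-- The directional derivative `p′(X)[H]`: the coefficient of `t` in `t ↦ p(X + tH)`. -/
def derivEval {g n : ℕ} (p : FreeAlgebra ℝ (Fin g))
    (X H : Fin g → Matrix (Fin n) (Fin n) ℝ) : Matrix (Fin n) (Fin n) ℝ :=
  (FreeAlgebra.lift ℝ
      (fun j => Polynomial.C (X j) + Polynomial.X * Polynomial.C (H j)) p).coeff 1

/-- The Hessian `p″(X)[H]`: twice the coefficient of `t²` in `t ↦ p(X + tH)`. -/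
def hessEval {g n : ℕ} (p : FreeAlgebra ℝ (Fin g))
    (X H : Fin g → Matrix (Fin n) (Fin n) ℝ) : Matrix (Fin n) (Fin n) ℝ :=
  (2 : ℝ) • (FreeAlgebra.lift ℝ
      (fun j => Polynomial.C (X j) + Polynomial.X * Polynomial.C (H j)) p).coeff 2

/-- The constant term of a free polynomial (so that `p(0)` is `constantTerm p` times the
identity matrix). -/
def constantTerm {g : ℕ} (p : FreeAlgebra ℝ (Fin g)) : ℝ :=
  FreeAlgebra.lift ℝ (fun _ : Fin g => (0 : ℝ)) p

/-- Evaluation of a word `w = x_{j₁}⋯x_{j_k}` at a tuple of matrices: `X_{j₁}⋯X_{j_k}`. -/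
def wordEval {g n : ℕ} (X : Fin g → Matrix (Fin n) (Fin n) ℝ)
    (w : FreeMonoid (Fin g)) : Matrix (Fin n) (Fin n) ℝ :=
  (w.toList.map X).prod

/-! The map `x ↦ x * x` is operator convex: for `a + b = 1`,
`a x² + b y² - (a x + b y)² = a b (x - y)²`. Hence if `ℓ` and the `sⱼ` are linear, then
`A - p(a X + b Y) = a (A - p(X)) + b (A - p(Y)) + a b Σⱼ (sⱼ(X) - sⱼ(Y))²` for a convex combination,
and the last sum is positive semidefinite because each `sⱼ(X) - sⱼ(Y)` is symmetric. -/

theorem smul_mul_self_add_smul_mul_self_sub {R A : Type*} [CommRing R] [Ring A] [Algebra R A]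
    {a b : R} (hab : a + b = 1) (x y : A) :
    a • (x * x) + b • (y * y) - (a • x + b • y) * (a • x + b • y)
      = (a * b) • ((x - y) * (x - y)) := by
  obtain rfl : b = 1 - a := eq_sub_of_add_eq' hab
  simp only [add_mul, mul_add, sub_mul, mul_sub, smul_mul_smul_comm, smul_sub]
  module

namespace Matrix

theorem convex_setOf_posDef {n R : Type*} [CommRing R] [PartialOrder R] [IsStrictOrderedRing R]
    [StarRing R] [StarOrderedRing R] : Convex R {M : Matrix n n R | M.PosDef} := by
  intro P hP Q hQ a b ha hb hab
  obtain rfl | ha := ha.eq_or_lt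
  · obtain rfl : b = 1 := by simpa using hab
    simpa using hQ
  · exact (hP.smul ha).add_posSemidef (hQ.posSemidef.smul hb)

variable {n : Type*} [Fintype n]

theorem IsHermitian.posSemidef_mul_self {R : Type*} [Ring R] [PartialOrder R] [StarRing R]
    [StarOrderedRing R] {M : Matrix n n R} (hM : M.IsHermitian) :
    (M * M).PosSemidef := by
  simpa only [hM.eq] using posSemidef_conjTranspose_mul_self M

theorem convex_setOf_posDef_sub_add_sum_mul_self {R E ι : Type*} [CommRing R] [PartialOrder R]
    [IsStrictOrderedRing R] [StarRing R] [StarOrderedRing R] [AddCommGroup E] [Module R E]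
    [Fintype ι] [DecidableEq n] {K : Set E} (hK : Convex R K) (A : Matrix n n R)
    (L : E →ₗ[R] Matrix n n R) (S : ι → E →ₗ[R] Matrix n n R)
    (hS : ∀ i, ∀ x ∈ K, (S i x).IsHermitian) :
    Convex R {x ∈ K | (A - (L x + ∑ i, S i x * S i x)).PosDef} := by
  rintro x ⟨hxK, hx⟩ y ⟨hyK, hy⟩ a b ha hb hab
  refine ⟨hK hxK hyK ha hb hab, ?_⟩
  have hsq : ∀ i, S i (a • x + b • y) * S i (a • x + b • y) = a • (S i x * S i x)
      + b • (S i y * S i y) - (a * b) • ((S i x - S i y) * (S i x - S i y)) := fun i => by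
    rw [← smul_mul_self_add_smul_mul_self_sub hab (S i x) (S i y), map_add, map_smul, map_smul,
      sub_sub_cancel]
  have hsplit : A - (L (a • x + b • y) + ∑ i, S i (a • x + b • y) * S i (a • x + b • y))
      = a • (A - (L x + ∑ i, S i x * S i x)) + b • (A - (L y + ∑ i, S i y * S i y))
        + ∑ i, (a * b) • ((S i x - S i y) * (S i x - S i y)) := by
    rw [Finset.sum_congr rfl fun i _ => hsq i]
    simp only [map_add, map_smul, Finset.sum_sub_distrib, Finset.sum_add_distrib,
      ← Finset.smul_sum]
    obtain rfl : b = 1 - a := eq_sub_of_add_eq' hab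
    module
  rw [hsplit]
  exact (convex_setOf_posDef hx hy ha hb hab).add_posSemidef <| posSemidef_sum _ fun i _ =>
    ((hS i x hxK).sub (hS i y hyK)).posSemidef_mul_self.smul (mul_nonneg ha hb)

end Matrix

instance FreeAlgebra.instStarModule {R X : Type*} [CommSemiring R] [StarRing R] [TrivialStar R] :
    StarModule R (FreeAlgebra R X) where
  star_smul r x := by
    rw [Algebra.smul_def, star_mul, FreeAlgebra.star_algebraMap, ← Algebra.commutes,
      ← Algebra.smul_def, star_trivial r]

section degOne

variable {g : ℕ} {ι : Type} [Fintype ι] [DecidableEq ι] {q : FreeAlgebra ℝ (Fin g)}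

theorem degOne_le_selfAdjoint :
    degOne g ≤ selfAdjoint.submodule ℝ (FreeAlgebra ℝ (Fin g)) :=
  Submodule.span_le.mpr <| Set.range_subset_iff.mpr FreeAlgebra.star_ι

theorem isHermitian_evalMat_of_mem_degOne (hq : q ∈ degOne g) {X : Fin g → Matrix ι ι ℝ}
    (hX : ∀ j, (X j).IsHermitian) : (evalMat q X).IsHermitian := by
  suffices degOne g ≤ (selfAdjoint.submodule ℝ (Matrix ι ι ℝ)).comap
      (FreeAlgebra.lift ℝ X).toLinearMap from this hq
  exact Submodule.span_le.mpr <| Set.range_subset_iff.mpr fun j => by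
    rw [SetLike.mem_coe, Submodule.mem_comap, AlgHom.toLinearMap_apply, FreeAlgebra.lift_ι_apply]
    exact hX j

theorem exists_linearMap_evalMat_eq (hq : q ∈ degOne g) :
    ∃ φ : (Fin g → Matrix ι ι ℝ) →ₗ[ℝ] Matrix ι ι ℝ, ∀ X, evalMat q X = φ X := by
  induction hq using Submodule.span_induction with
  | mem x hx =>
    obtain ⟨j, rfl⟩ := hx
    exact ⟨LinearMap.proj j, fun X => by simp [evalMat]⟩
  | zero => exact ⟨0, fun X => by simp [evalMat]⟩
  | add x y _ _ hx hy =>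
    obtain ⟨φ, hφ⟩ := hx
    obtain ⟨ψ, hψ⟩ := hy
    exact ⟨φ + ψ, fun X => by simp [evalMat, ← hφ, ← hψ]⟩
  | smul c x _ hx =>
    obtain ⟨φ, hφ⟩ := hx
    exact ⟨c • φ, fun X => by simp [evalMat, ← hφ]⟩

end degOne

theorem stmt_2_general (g : ℕ) (p l : FreeAlgebra ℝ (Fin g)) (m : ℕ)
    (s : Fin m → FreeAlgebra ℝ (Fin g))
    (hl : l ∈ degOne g) (hs : ∀ j, s j ∈ degOne g)
    (hp : p = l + ∑ j, star (s j) * s j) :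
    star p = p ∧
    (∀ n : ℕ, evalMat p (fun _ => (0 : Matrix (Fin n) (Fin n) ℝ)) = 0) ∧
    (∀ n : ℕ, 0 < n → ∀ A : Matrix (Fin n) (Fin n) ℝ, A.PosDef →
      Convex ℝ {X : Fin g → Matrix (Fin n) (Fin n) ℝ |
        (∀ j, (X j).IsSymm) ∧ (A - evalMat p X).PosDef}) := by
  have hs_star (j : Fin m) : star (s j) = s j := (degOne_le_selfAdjoint (hs j)).star_eq
  have hp_eval (n : ℕ) (X : Fin g → Matrix (Fin n) (Fin n) ℝ) :
      evalMat p X = evalMat l X + ∑ j, evalMat (s j) X * evalMat (s j) X := by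
    simp [hp, evalMat, hs_star]
  refine ⟨?_, fun n => ?_, fun n _ A _ => ?_⟩
  · rw [hp]
    exact ((degOne_le_selfAdjoint hl).add
      (isSelfAdjoint_sum _ fun j _ => .star_mul_self (s j))).star_eq
  · obtain ⟨L, hL⟩ := exists_linearMap_evalMat_eq (ι := Fin n) hl
    choose S hS using fun j => exists_linearMap_evalMat_eq (ι := Fin n) (hs j)
    simp [hp_eval, hL, hS, ← Pi.zero_def]
  · obtain ⟨L, hL⟩ := exists_linearMap_evalMat_eq (ι := Fin n) hl
    choose S hS using fun j => exists_linearMap_evalMat_eq (ι := Fin n) (hs j)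
    have hK : Convex ℝ {X : Fin g → Matrix (Fin n) (Fin n) ℝ | ∀ j, (X j).IsSymm} :=
      fun X hX Y hY a b _ _ _ j => ((hX j).smul a).add ((hY j).smul b)
    simp only [hp_eval, hL, hS]
    refine Matrix.convex_setOf_posDef_sub_add_sum_mul_self hK A L S fun j X hX => ?_
    rw [← hS]
    exact isHermitian_evalMat_of_mem_degOne (hs j) fun i => Matrix.isHermitian_iff_isSymm.mpr (hX i)

/-- If `p = ℓ + Σⱼ sⱼ* sⱼ` with `ℓ` symmetric homogeneous of degree one and the
`sⱼ` homogeneous of degree one, then `p` is symmetric, `p(0) = 0`, and `p` is quasi-convex. -/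
theorem stmt_2 (g : ℕ) (p l : FreeAlgebra ℝ (Fin g)) (m : ℕ)
    (s : Fin m → FreeAlgebra ℝ (Fin g))
    (hl : l ∈ degOne g) (hlsym : star l = l) (hs : ∀ j, s j ∈ degOne g)
    (hp : p = l + ∑ j, star (s j) * s j) :
    star p = p ∧
    (∀ n : ℕ, evalMat p (fun _ => (0 : Matrix (Fin n) (Fin n) ℝ)) = 0) ∧
    (∀ n : ℕ, 0 < n → ∀ A : Matrix (Fin n) (Fin n) ℝ, A.PosDef →
      Convex ℝ {X : Fin g → Matrix (Fin n) (Fin n) ℝ |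
        (∀ j, (X j).IsSymm) ∧ (A - evalMat p X).PosDef}) :=
  stmt_2_general g p l m s hl hs hp
end
end

section
/- Let p ∈ ℝ⟨x⟩ be symmetric, quasi-convex, let n be a positive integer and let A ∈ 𝕊ₙ(ℝ) be positive definite. Then X ∈ 𝕊ₙ(ℝ^g) lies in the (topological) boundary of the set D(A) = {Y ∈ 𝕊ₙ(ℝ^g) : A − p(Y) is positive definite} if and only if A − p(X) is positive semidefinite and has a non-trivial kernel. -/
open scoped BigOperators

noncomputable section

open scoped Matrix Topology Polynomial
open Filter Set

/-! Since `p` is symmetric and `X ↦ p(X)` is continuous, `D(A)` is open in `𝕊ₙ(ℝ^g)` and its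
closure lies in `{X : A − p(X) ⪰ 0}`. Conversely every such `X` is the limit of `tX` as `t ↑ 1`,
and `tX ∈ D(A)` for `t ∈ [0, 1)`: convexity of `D(A + εI)`, which contains `0` and `X`, gives
`A − p(tX) ⪰ 0` for `t ∈ [0, 1]`; as `det (A − p(tX))` is a polynomial in `t` that does not
vanish at `t = 0`, some `s ∈ (t, 1)` has `A − p(sX) ≻ 0`, and convexity of `D(A)` between `0`
and `sX` gives `A − p(tX) ≻ 0`. Hence the frontier consists of the `X` with `A − p(X) ⪰ 0`
singular. -/

section Matrix

variable {ι : Type*} [Fintype ι]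

theorem Matrix.isClosed_setOf_posSemidef :
    IsClosed {M : Matrix ι ι ℝ | M.PosSemidef} := by
  have : {M : Matrix ι ι ℝ | M.PosSemidef} =
      {M | Mᴴ = M} ∩ ⋂ v : ι → ℝ, {M | 0 ≤ v ⬝ᵥ M *ᵥ v} := by
    ext M
    simp [Matrix.posSemidef_iff_dotProduct_mulVec, Matrix.IsHermitian]
  rw [this]
  exact (isClosed_eq (by fun_prop) continuous_id).inter
    (isClosed_iInter fun v => isClosed_le continuous_const (by fun_prop))

theorem Matrix.PosDef.eventually_posDef {M : Matrix ι ι ℝ} (hM : M.PosDef) :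
    ∀ᶠ N in 𝓝 M, N.IsHermitian → N.PosDef := by
  have hsphere : ∀ᶠ N in 𝓝 M, ∀ u ∈ Metric.sphere (0 : ι → ℝ) 1, 0 < u ⬝ᵥ N *ᵥ u := by
    refine (isCompact_sphere 0 1).eventually_forall_of_forall_eventually fun u hu => ?_
    have hMu : 0 < u ⬝ᵥ M *ᵥ u := by
      simpa using hM.dotProduct_mulVec_pos (ne_zero_of_mem_unit_sphere ⟨u, hu⟩)
    have hcont : Continuous fun q : Matrix ι ι ℝ × (ι → ℝ) => q.2 ⬝ᵥ q.1 *ᵥ q.2 := by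
      fun_prop
    exact hcont.continuousAt.eventually (lt_mem_nhds hMu)
  filter_upwards [hsphere] with N hN hNh
  refine .of_dotProduct_mulVec_pos hNh fun v hv => ?_
  have hnorm : 0 < ‖v‖ := norm_pos_iff.2 hv
  have := hN (‖v‖⁻¹ • v) (by simp [norm_smul, hnorm.ne'])
  simp only [Matrix.mulVec_smul, dotProduct_smul, smul_dotProduct, smul_eq_mul] at this
  rw [← mul_assoc] at this
  simpa using pos_of_mul_pos_right this (by positivity)

theorem Matrix.posSemidef_of_forall_posDef_add_smul_one [DecidableEq ι] {M : Matrix ι ι ℝ}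
    (h : ∀ ε : ℝ, 0 < ε → (M + ε • 1).PosDef) : M.PosSemidef := by
  have hlim : Tendsto (fun ε : ℝ => M + ε • 1) (𝓝[>] 0) (𝓝 M) := by
    have hcont : Continuous fun ε : ℝ => M + ε • (1 : Matrix ι ι ℝ) := by fun_prop
    simpa using hcont.continuousWithinAt (s := Ioi 0) (x := 0) |>.tendsto
  exact isClosed_setOf_posSemidef.mem_of_tendsto hlim
    (eventually_nhdsWithin_of_forall fun ε hε => (h ε hε).posSemidef)

end Matrix

section EvalMat

variable {g : ℕ} {ι : Type} [Fintype ι] [DecidableEq ι]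

theorem continuous_evalMat (p : FreeAlgebra ℝ (Fin g)) :
    Continuous fun X : Fin g → Matrix ι ι ℝ => evalMat p X := by
  induction p using FreeAlgebra.induction with
  | grade0 r => simpa only [evalMat, AlgHom.commutes] using continuous_const
  | grade1 j => simpa only [evalMat, FreeAlgebra.lift_ι_apply] using continuous_apply j
  | mul a b ha hb => simpa only [evalMat, map_mul] using ha.matrix_mul hb
  | add a b ha hb =>
    simp only [evalMat, map_add] at *
    exact ha.add hb

theorem evalMat_star {X : Fin g → Matrix ι ι ℝ} (hX : ∀ j, (X j).IsSymm)
    (p : FreeAlgebra ℝ (Fin g)) : evalMat (star p) X = (evalMat p X)ᴴ := by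
  induction p using FreeAlgebra.induction with
  | grade0 r =>
    rw [evalMat, evalMat, FreeAlgebra.star_algebraMap, AlgHom.commutes]
    simp [Algebra.algebraMap_eq_smul_one]
  | grade1 j => simpa [evalMat] using (hX j).symm
  | mul a b ha hb =>
    simp only [evalMat, star_mul, map_mul, Matrix.conjTranspose_mul] at *
    rw [ha, hb]
  | add a b ha hb =>
    simp only [evalMat, star_add, map_add, Matrix.conjTranspose_add] at *
    rw [ha, hb]

theorem isHermitian_evalMat {p : FreeAlgebra ℝ (Fin g)} (hp : star p = p)
    {X : Fin g → Matrix ι ι ℝ} (hX : ∀ j, (X j).IsSymm) : (evalMat p X).IsHermitian := by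
  rw [Matrix.IsHermitian, ← evalMat_star hX, hp]

theorem evalMat_smul_eq_map_aeval (p : FreeAlgebra ℝ (Fin g)) (X : Fin g → Matrix ι ι ℝ)
    (t : ℝ) :
    evalMat p (t • X) =
      (FreeAlgebra.lift ℝ (fun j => (Polynomial.X : ℝ[X]) • (X j).map Polynomial.C) p).map
        (Polynomial.aeval t) := by
  change FreeAlgebra.lift ℝ (t • X) p = (Polynomial.aeval t).mapMatrix _
  rw [← AlgHom.comp_apply]
  congr 1
  refine FreeAlgebra.hom_ext (funext fun j => ?_)
  ext i k
  simp only [Function.comp_apply, FreeAlgebra.lift_ι_apply, AlgHom.coe_comp,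
    AlgHom.mapMatrix_apply]
  rw [Pi.smul_apply, Matrix.smul_apply, Matrix.map_apply, Matrix.smul_apply, Matrix.map_apply,
    smul_eq_mul, smul_eq_mul, map_mul, Polynomial.aeval_X, Polynomial.aeval_C]
  simp

theorem exists_eval_eq_det_sub_evalMat_smul (A : Matrix ι ι ℝ) (p : FreeAlgebra ℝ (Fin g))
    (X : Fin g → Matrix ι ι ℝ) :
    ∃ P : ℝ[X], ∀ t : ℝ, P.eval t = (A - evalMat p (t • X)).det := by
  refine ⟨(A.map Polynomial.C -
    FreeAlgebra.lift ℝ (fun j => (Polynomial.X : ℝ[X]) • (X j).map Polynomial.C) p).det,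
    fun t => ?_⟩
  rw [← Polynomial.coe_aeval_eq_eval, AlgHom.map_det, evalMat_smul_eq_map_aeval]
  congr 1
  ext i k
  simp

end EvalMat

section QuasiConvex

variable {g n : ℕ} {p : FreeAlgebra ℝ (Fin g)}

theorem IsQuasiConvex.evalMat_zero (hp : IsQuasiConvex p) :
    evalMat p (0 : Fin g → Matrix (Fin n) (Fin n) ℝ) = 0 :=
  hp.1 n

theorem IsQuasiConvex.convex (hp : IsQuasiConvex p) {B : Matrix (Fin n) (Fin n) ℝ}
    (hB : B.PosDef) :
    Convex ℝ {X : Fin g → Matrix (Fin n) (Fin n) ℝ |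
      (∀ j, (X j).IsSymm) ∧ (B - evalMat p X).PosDef} := by
  rcases n.eq_zero_or_pos with rfl | hn
  · exact subsingleton_of_subsingleton.convex
  · exact hp.2 n hn B hB

theorem IsQuasiConvex.posDef_sub_evalMat_smul (hp : IsQuasiConvex p)
    {B : Matrix (Fin n) (Fin n) ℝ} (hB : B.PosDef) {X : Fin g → Matrix (Fin n) (Fin n) ℝ}
    (hX : ∀ j, (X j).IsSymm) (hXB : (B - evalMat p X).PosDef) {t : ℝ} (ht : t ∈ Icc (0 : ℝ) 1) :
    (B - evalMat p (t • X)).PosDef := by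
  have h0 : (0 : Fin g → Matrix (Fin n) (Fin n) ℝ) ∈
      {X | (∀ j, (X j).IsSymm) ∧ (B - evalMat p X).PosDef} :=
    ⟨fun j => Matrix.isSymm_zero, by rwa [hp.evalMat_zero, sub_zero]⟩
  exact ((hp.convex hB).smul_mem_of_zero_mem h0 ⟨hX, hXB⟩ ht).2

theorem IsQuasiConvex.posSemidef_sub_evalMat_smul (hp : IsQuasiConvex p)
    {A : Matrix (Fin n) (Fin n) ℝ} (hA : A.PosDef)
    {X : Fin g → Matrix (Fin n) (Fin n) ℝ} (hX : ∀ j, (X j).IsSymm)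
    (hXA : (A - evalMat p X).PosSemidef) {t : ℝ} (ht : t ∈ Icc (0 : ℝ) 1) :
    (A - evalMat p (t • X)).PosSemidef := by
  refine Matrix.posSemidef_of_forall_posDef_add_smul_one fun ε hε => ?_
  have hε1 : (ε • 1 : Matrix (Fin n) (Fin n) ℝ).PosDef := .smul Matrix.PosDef.one hε
  rw [sub_add_eq_add_sub]
  refine hp.posDef_sub_evalMat_smul (hA.add_posSemidef hε1.posSemidef) hX ?_ ht
  rw [add_sub_right_comm]
  exact .posSemidef_add hXA hε1

theorem IsQuasiConvex.posDef_sub_evalMat_smul_of_posSemidef (hp : IsQuasiConvex p)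
    {A : Matrix (Fin n) (Fin n) ℝ} (hA : A.PosDef)
    {X : Fin g → Matrix (Fin n) (Fin n) ℝ} (hX : ∀ j, (X j).IsSymm)
    (hXA : (A - evalMat p X).PosSemidef) {t : ℝ} (ht : t ∈ Ico (0 : ℝ) 1) :
    (A - evalMat p (t • X)).PosDef := by
  obtain ⟨P, hP⟩ := exists_eval_eq_det_sub_evalMat_smul A p X
  have hP0 : P ≠ 0 := by
    rintro rfl
    have := hP 0
    rw [zero_smul, hp.evalMat_zero, sub_zero, Polynomial.eval_zero] at this
    exact hA.det_pos.ne this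
  obtain ⟨s, ⟨hts, hs1⟩, hsP⟩ :=
    ((Set.Ioo_infinite ht.2).sdiff (Polynomial.finite_setOfPred_isRoot hP0)).nonempty
  have hs0 : 0 < s := ht.1.trans_lt hts
  have hsA : (A - evalMat p (s • X)).PosDef := by
    rw [(hp.posSemidef_sub_evalMat_smul hA hX hXA ⟨hs0.le, hs1.le⟩).posDef_iff_det_ne_zero,
      ← hP]
    exact hsP
  have := hp.posDef_sub_evalMat_smul hA (X := s • X) (fun j => (hX j).smul s) hsA
    (t := t / s) ⟨div_nonneg ht.1 hs0.le, (div_le_one hs0).2 hts.le⟩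
  rwa [smul_smul, div_mul_cancel₀ _ hs0.ne'] at this

end QuasiConvex

section Frontier

variable {T ι : Type*} [TopologicalSpace T] [Fintype ι] {F : T → Matrix ι ι ℝ}

theorem isOpen_setOf_posDef (hF : Continuous F) (hH : ∀ y, (F y).IsHermitian) :
    IsOpen {y | (F y).PosDef} :=
  isOpen_iff_mem_nhds.2 fun y hy =>
    ((hF.tendsto y).eventually hy.eventually_posDef).mono fun z hz => hz (hH z)

theorem closure_setOf_posDef_subset (hF : Continuous F) :
    closure {y | (F y).PosDef} ⊆ {y | (F y).PosSemidef} :=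
  closure_minimal (fun _ hy => hy.posSemidef) (Matrix.isClosed_setOf_posSemidef.preimage hF)

end Frontier

theorem IsQuasiConvex.mem_closure_setOf_posDef {g n : ℕ} {p : FreeAlgebra ℝ (Fin g)}
    (hp : IsQuasiConvex p) {A : Matrix (Fin n) (Fin n) ℝ} (hA : A.PosDef)
    (X : {Y : Fin g → Matrix (Fin n) (Fin n) ℝ // ∀ j, (Y j).IsSymm})
    (hXA : (A - evalMat p X.1).PosSemidef) :
    X ∈ closure {Y : {Y : Fin g → Matrix (Fin n) (Fin n) ℝ // ∀ j, (Y j).IsSymm} |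
      (A - evalMat p Y.1).PosDef} := by
  let c : ℝ → {Y : Fin g → Matrix (Fin n) (Fin n) ℝ // ∀ j, (Y j).IsSymm} :=
    fun t => ⟨t • X.1, fun j => (X.2 j).smul t⟩
  have hc : Continuous c := (continuous_id.smul continuous_const).subtype_mk _
  have hc1 : c 1 = X := Subtype.ext (one_smul ℝ X.1)
  refine mem_closure_of_tendsto (hc1 ▸ hc.continuousWithinAt.tendsto (s := Iio 1)) ?_
  filter_upwards [Ico_mem_nhdsLT (zero_lt_one' ℝ)] with t ht
  exact hp.posDef_sub_evalMat_smul_of_posSemidef hA X.2 hXA ht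

theorem stmt_9_general (g n : ℕ) (p : FreeAlgebra ℝ (Fin g))
    (hsym : star p = p) (hqc : IsQuasiConvex p)
    (A : Matrix (Fin n) (Fin n) ℝ) (hA : A.PosDef)
    (X : {Y : Fin g → Matrix (Fin n) (Fin n) ℝ // ∀ j, (Y j).IsSymm}) :
    X ∈ frontier {Y : {Y : Fin g → Matrix (Fin n) (Fin n) ℝ // ∀ j, (Y j).IsSymm} |
        (A - evalMat p Y.1).PosDef} ↔
      (A - evalMat p X.1).PosSemidef ∧
        ∃ v : Fin n → ℝ, v ≠ 0 ∧ (A - evalMat p X.1).mulVec v = 0 := by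
  have hF : Continuous fun Y : {Y : Fin g → Matrix (Fin n) (Fin n) ℝ // ∀ j, (Y j).IsSymm} =>
      A - evalMat p Y.1 :=
    continuous_const.sub ((continuous_evalMat p).comp continuous_subtype_val)
  have hH (Y : {Y : Fin g → Matrix (Fin n) (Fin n) ℝ // ∀ j, (Y j).IsSymm}) :
      (A - evalMat p Y.1).IsHermitian :=
    hA.isHermitian.sub (isHermitian_evalMat hsym Y.2)
  have hclosure : X ∈ closure {Y : {Y : Fin g → Matrix (Fin n) (Fin n) ℝ // ∀ j, (Y j).IsSymm} |
      (A - evalMat p Y.1).PosDef} ↔ (A - evalMat p X.1).PosSemidef :=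
    ⟨(closure_setOf_posDef_subset hF ·), hqc.mem_closure_setOf_posDef hA X⟩
  rw [(isOpen_setOf_posDef hF hH).frontier_eq, Set.mem_sdiff, hclosure]
  refine and_congr_right fun hXA => ?_
  rw [Set.mem_ofPred_eq, hXA.posDef_iff_det_ne_zero, not_not, Matrix.exists_mulVec_eq_zero_iff]

/-- for quasi-convex `p` and positive definite `A`, a symmetric tuple `X` is in
the boundary of `D(A)` (inside `𝕊ₙ(ℝ^g)`) iff `A − p(X)` is positive semidefinite with
nontrivial kernel. -/
theorem stmt_9 (g n : ℕ) (hn : 0 < n) (p : FreeAlgebra ℝ (Fin g))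
    (hsym : star p = p) (hqc : IsQuasiConvex p)
    (A : Matrix (Fin n) (Fin n) ℝ) (hA : A.PosDef)
    (X : {Y : Fin g → Matrix (Fin n) (Fin n) ℝ // ∀ j, (Y j).IsSymm}) :
    X ∈ frontier {Y : {Y : Fin g → Matrix (Fin n) (Fin n) ℝ // ∀ j, (Y j).IsSymm} |
        (A - evalMat p Y.1).PosDef} ↔
      (A - evalMat p X.1).PosSemidef ∧
        ∃ v : Fin n → ℝ, v ≠ 0 ∧ (A - evalMat p X.1).mulVec v = 0 :=
  stmt_9_general g n p hsym hqc A hA X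
end
end

section
/- Let p ∈ ℝ⟨x⟩ be symmetric and quasi-convex, let A ∈ 𝕊ₙ(ℝ) be positive definite, let X ∈ 𝕊ₙ(ℝ^g) lie in the boundary of D(A) = {Y ∈ 𝕊ₙ(ℝ^g) : A − p(Y) is positive definite}, and let v ≠ 0 in ℝⁿ satisfy Av = p(X)v. If the kernel of A − p(X) has dimension one, then there exists a linear subspace H of the clamped tangent plane T(X,v) = {H ∈ 𝕊ₙ(ℝ^g) : p′(X)[H]v = 0} of codimension at most one in T(X,v) such that ⟨p″(X)[H]v, v⟩ ≥ 0 for all H ∈ H. -/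
open scoped BigOperators

noncomputable section

open Polynomial Matrix
open scoped RealInnerProductSpace

variable {g n : ℕ}
abbrev Mat (n : ℕ) := Matrix (Fin n) (Fin n) ℝ

/-- transpose of a coefficient of the lifted polynomial -/
lemma coeff_lift_transpose (X H : Fin g → Mat n) (hX : ∀ j, (X j).IsSymm)
    (hH : ∀ j, (H j).IsSymm) (p : FreeAlgebra ℝ (Fin g)) (k : ℕ) :
    ((FreeAlgebra.lift ℝ (fun j => C (X j) + Polynomial.X * C (H j)) p).coeff k)ᵀ
      = (FreeAlgebra.lift ℝ (fun j => C (X j) + Polynomial.X * C (H j)) (star p)).coeff k := by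
  induction p using FreeAlgebra.induction generalizing k with
  | grade0 r =>
      rw [FreeAlgebra.star_algebraMap]
      simp only [AlgHom.commutes, Polynomial.algebraMap_apply, Polynomial.coeff_C]
      split <;> simp [Algebra.algebraMap_eq_smul_one, Matrix.transpose_smul]
  | grade1 j =>
      rw [FreeAlgebra.star_ι]
      simp only [FreeAlgebra.lift_ι_apply]
      rw [Polynomial.X_mul]
      match k with
      | 0 => simp [Polynomial.coeff_add, Polynomial.mul_coeff_zero, (hX j).eq]
      | 1 => simp [Polynomial.coeff_add, Polynomial.coeff_mul_X, Polynomial.coeff_C, (hH j).eq]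
      | (k+2) => simp [Polynomial.coeff_add, Polynomial.coeff_mul_X, Polynomial.coeff_C]
  | mul a b ha hb =>
      rw [StarMul.star_mul, _root_.map_mul, _root_.map_mul, Polynomial.coeff_mul,
        Polynomial.coeff_mul, Matrix.transpose_sum]
      conv_lhs => rw [← Finset.HasAntidiagonal.map_swap_antidiagonal]
      rw [Finset.sum_map]
      refine Finset.sum_congr rfl fun x _ => ?_
      simp only [Function.Embedding.coeFn_mk, Prod.fst_swap, Prod.snd_swap]
      rw [Matrix.transpose_mul, ha, hb]
  | add a b ha hb =>
      rw [star_add, map_add, map_add, Polynomial.coeff_add, Polynomial.coeff_add,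
        Matrix.transpose_add, ha, hb]

lemma lift_add_smul_eq_eval₂ (X H : Fin g → Mat n) (t : ℝ) (p : FreeAlgebra ℝ (Fin g)) :
    FreeAlgebra.lift ℝ (fun j => X j + t • H j) p
      = Polynomial.eval₂ (RingHom.id (Mat n)) (t • 1)
          (FreeAlgebra.lift ℝ (fun j => C (X j) + Polynomial.X * C (H j)) p) := by
  induction p using FreeAlgebra.induction with
  | grade0 r =>
      rw [AlgHom.commutes, AlgHom.commutes, Polynomial.algebraMap_apply, Polynomial.eval₂_C,
        RingHom.id_apply]
  | grade1 j =>
      rw [FreeAlgebra.lift_ι_apply, FreeAlgebra.lift_ι_apply, Polynomial.X_mul,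
        Polynomial.eval₂_add, Polynomial.eval₂_C, Polynomial.eval₂_mul_X, Polynomial.eval₂_C,
        RingHom.id_apply, RingHom.id_apply, mul_smul_comm, mul_one]
  | mul a b ha hb =>
      rw [_root_.map_mul, _root_.map_mul,
        Polynomial.eval₂_mul_noncomm _ _ (fun k => (Commute.one_right _).smul_right t),
        ha, hb]
  | add a b ha hb =>
      rw [map_add, map_add, Polynomial.eval₂_add, ha, hb]

lemma coeff_zero_eq (X H : Fin g → Mat n) (p : FreeAlgebra ℝ (Fin g)) :
    (FreeAlgebra.lift ℝ (fun j => C (X j) + Polynomial.X * C (H j)) p).coeff 0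
      = FreeAlgebra.lift ℝ X p := by
  have h := lift_add_smul_eq_eval₂ X H 0 p
  rw [zero_smul, Polynomial.eval₂_at_zero, RingHom.id_apply] at h
  simp only [zero_smul, add_zero] at h
  rw [← h]

lemma continuous_lift (p : FreeAlgebra ℝ (Fin g)) :
    Continuous fun Y : Fin g → Mat n => (FreeAlgebra.lift ℝ Y p : Mat n) := by
  induction p using FreeAlgebra.induction with
  | grade0 r => simpa using continuous_const
  | grade1 j => simpa using continuous_apply j
  | mul a b ha hb =>
      simp only [_root_.map_mul]
      exact ha.matrix_mul hb
  | add a b ha hb =>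
      simp only [map_add]
      exact ha.add hb

lemma eval₂_eq_sum_smul (t : ℝ) (q : Polynomial (Mat n)) {N : ℕ} (hN : q.natDegree < N) :
    Polynomial.eval₂ (RingHom.id (Mat n)) (t • 1) q
      = ∑ i ∈ Finset.range N, t ^ i • q.coeff i := by
  rw [Polynomial.eval₂_eq_sum_range' _ hN]
  refine Finset.sum_congr rfl fun i _ => ?_
  rw [RingHom.id_apply, _root_.smul_pow, one_pow, mul_smul_comm, mul_one]

abbrev toE (w : Fin n → ℝ) : EuclideanSpace ℝ (Fin n) := (WithLp.equiv 2 (Fin n → ℝ)).symm w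

lemma inner_toE (w w' : Fin n → ℝ) : ⟪toE w, toE w'⟫ = dotProduct w w' := by
  simp [PiLp.inner_apply, dotProduct, mul_comm]

lemma norm_toE_sq (w : Fin n → ℝ) : ‖toE w‖ ^ 2 = dotProduct w w := by
  rw [← inner_toE, real_inner_self_eq_norm_sq]

lemma exists_dot_bound (B : Mat n) : ∃ K : ℝ, 0 ≤ K ∧ ∀ w w' : Fin n → ℝ,
    |dotProduct (B.mulVec w) w'| ≤ K * ‖toE w‖ * ‖toE w'‖ := by
  classical
  let T : EuclideanSpace ℝ (Fin n) →ₗ[ℝ] EuclideanSpace ℝ (Fin n) :=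
    (WithLp.linearEquiv 2 ℝ (Fin n → ℝ)).symm.toLinearMap ∘ₗ B.mulVecLin ∘ₗ
      (WithLp.linearEquiv 2 ℝ (Fin n → ℝ)).toLinearMap
  let Tc := LinearMap.toContinuousLinearMap T
  refine ⟨‖Tc‖, norm_nonneg _, fun w w' => ?_⟩
  have h1 : toE (B.mulVec w) = Tc (toE w) := rfl
  have h2 : |dotProduct (B.mulVec w) w'| ≤ ‖toE (B.mulVec w)‖ * ‖toE w'‖ := by
    rw [← inner_toE]; exact abs_real_inner_le_norm _ _
  refine h2.trans ?_
  have h3 : ‖toE (B.mulVec w)‖ ≤ ‖Tc‖ * ‖toE w‖ := by rw [h1]; exact Tc.le_opNorm _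
  exact mul_le_mul_of_nonneg_right h3 (norm_nonneg _)

lemma sphere_min_bound (hn : 0 < n) (f : EuclideanSpace ℝ (Fin n) → ℝ) (hf : Continuous f)
    (hpos : ∀ w, w ≠ 0 → 0 < f w) (hhom : ∀ (s : ℝ) w, f (s • w) = s ^ 2 * f w) :
    ∃ δ : ℝ, 0 < δ ∧ ∀ w, δ * ‖w‖ ^ 2 ≤ f w := by
  have hsp : IsCompact (Metric.sphere (0 : EuclideanSpace ℝ (Fin n)) 1) := isCompact_sphere _ _
  have hne : (Metric.sphere (0 : EuclideanSpace ℝ (Fin n)) 1).Nonempty := by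
    refine ⟨EuclideanSpace.single ⟨0, hn⟩ 1, ?_⟩
    simp [EuclideanSpace.norm_single]
  obtain ⟨w₀, hw₀mem, hw₀min⟩ := hsp.exists_isMinOn hne hf.continuousOn
  have hw₀norm : ‖w₀‖ = 1 := by simpa using hw₀mem
  have hw₀ne : w₀ ≠ 0 := by intro h; rw [h] at hw₀norm; simp at hw₀norm
  refine ⟨f w₀, hpos _ hw₀ne, fun w => ?_⟩
  rcases eq_or_ne w 0 with rfl | hw
  · have : f ((0:ℝ) • (0 : EuclideanSpace ℝ (Fin n))) = 0 := by rw [hhom]; ring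
    simp only [zero_smul] at this
    simp [this]
  · have hnw : ‖w‖ ≠ 0 := norm_ne_zero_iff.mpr hw
    have hu : ‖(‖w‖⁻¹ • w : EuclideanSpace ℝ (Fin n))‖ = 1 := by
      rw [norm_smul, norm_inv, norm_norm, inv_mul_cancel₀ hnw]
    have hmin := hw₀min (by simpa using hu : (‖w‖⁻¹ • w) ∈ Metric.sphere (0 : EuclideanSpace ℝ (Fin n)) 1)
    have hfw : f (‖w‖⁻¹ • w) = (‖w‖⁻¹) ^ 2 * f w := hhom _ _
    have h2 : f w₀ ≤ (‖w‖⁻¹) ^ 2 * f w := by rw [← hfw]; exact hmin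
    have hn2 : (0:ℝ) < ‖w‖ ^ 2 := by positivity
    calc f w₀ * ‖w‖ ^ 2 ≤ ((‖w‖⁻¹) ^ 2 * f w) * ‖w‖ ^ 2 :=
          mul_le_mul_of_nonneg_right h2 hn2.le
      _ = f w := by field_simp

lemma gap_lemma (hn : 0 < n) (M : Mat n) (hpsd : M.PosSemidef) (v : Fin n → ℝ) (hv : v ≠ 0)
    (hker : ∀ w, M.mulVec w = 0 → ∃ s : ℝ, w = s • v) :
    ∃ δ : ℝ, 0 < δ ∧ ∀ u : Fin n → ℝ, dotProduct u v = 0 →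
      δ * ‖toE u‖ ^ 2 ≤ dotProduct (M.mulVec u) u := by
  classical
  set f : EuclideanSpace ℝ (Fin n) → ℝ := fun w =>
    dotProduct (M.mulVec (WithLp.equiv 2 (Fin n → ℝ) w)) (WithLp.equiv 2 (Fin n → ℝ) w)
      + (dotProduct (WithLp.equiv 2 (Fin n → ℝ) w) v) ^ 2 with hf_def
  have cdot : ∀ (F G : (Fin n → ℝ) → (Fin n → ℝ)), Continuous F → Continuous G →
      Continuous fun w : Fin n → ℝ => dotProduct (F w) (G w) := by
    intro F G hF hG
    simp only [dotProduct]
    exact continuous_finset_sum _ fun i _ =>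
      ((continuous_apply i).comp hF).mul ((continuous_apply i).comp hG)
  have cmv : Continuous fun w : Fin n → ℝ => M.mulVec w := by
    have := M.mulVecLin.continuous_of_finiteDimensional
    exact this
  have hcont : Continuous f := by
    have hequiv : Continuous fun w : EuclideanSpace ℝ (Fin n) =>
        (WithLp.equiv 2 (Fin n → ℝ)) w := PiLp.continuous_ofLp _ _
    exact ((cdot _ _ cmv continuous_id).comp hequiv).add
      (((cdot _ _ continuous_id continuous_const).comp hequiv).pow 2)
  have hVpos : 0 < dotProduct v v := by
    have hne : toE v ≠ 0 := by
      intro h; apply hv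
      have := congrArg (WithLp.equiv 2 (Fin n → ℝ)) h
      simpa using this
    nlinarith [norm_pos_iff.mpr hne, norm_toE_sq (n := n) v]
  have hpos : ∀ w : EuclideanSpace ℝ (Fin n), w ≠ 0 → 0 < f w := by
    intro w hw
    have hu : (WithLp.equiv 2 (Fin n → ℝ)) w ≠ 0 := by
      intro h; apply hw
      have := congrArg (WithLp.equiv 2 (Fin n → ℝ)).symm h
      simpa using this
    have h1 : 0 ≤ dotProduct (M.mulVec ((WithLp.equiv 2 (Fin n → ℝ)) w))
        ((WithLp.equiv 2 (Fin n → ℝ)) w) := by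
      have := hpsd.dotProduct_mulVec_nonneg ((WithLp.equiv 2 (Fin n → ℝ)) w)
      simpa [dotProduct_comm] using this
    have h2 : (0:ℝ) ≤ (dotProduct ((WithLp.equiv 2 (Fin n → ℝ)) w) v) ^ 2 := sq_nonneg _
    rcases lt_or_eq_of_le h1 with h1' | h1'
    · have : 0 < f w := by simp only [hf_def]; nlinarith
      exact this
    rcases lt_or_eq_of_le h2 with h2' | h2'
    · have : 0 < f w := by simp only [hf_def]; nlinarith
      exact this
    exfalso
    have hMu : M.mulVec ((WithLp.equiv 2 (Fin n → ℝ)) w) = 0 := by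
      refine (hpsd.dotProduct_mulVec_zero_iff _).mp ?_
      simpa [dotProduct_comm] using h1'.symm
    obtain ⟨s, hs⟩ := hker _ hMu
    rw [hs, smul_dotProduct] at h2'
    have hs0 : s = 0 := by
      have h3 : (s * dotProduct v v) ^ 2 = 0 := by
        simpa [smul_eq_mul] using h2'.symm
      have h4 : s * dotProduct v v = 0 := by
        nlinarith [sq_nonneg (s * dotProduct v v)]
      rcases mul_eq_zero.mp h4 with h | h
      · exact h
      · exact absurd h hVpos.ne'
    rw [hs0, zero_smul] at hs
    exact hu hs
  have hhom : ∀ (s : ℝ) (w : EuclideanSpace ℝ (Fin n)), f (s • w) = s ^ 2 * f w := by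
    intro s w
    simp only [hf_def]
    have : (WithLp.equiv 2 (Fin n → ℝ)) (s • w) = s • ((WithLp.equiv 2 (Fin n → ℝ)) w) := rfl
    rw [this, Matrix.mulVec_smul, smul_dotProduct, dotProduct_smul,
      smul_dotProduct]
    simp only [smul_eq_mul]
    ring
  obtain ⟨δ, hδ, hmin⟩ := sphere_min_bound hn f hcont hpos hhom
  refine ⟨δ, hδ, fun u hu => ?_⟩
  have := hmin (toE u)
  have heq : f (toE u) = dotProduct (M.mulVec u) u := by
    simp only [hf_def]
    have h0 : (WithLp.equiv 2 (Fin n → ℝ)) (toE u) = u := rfl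
    rw [h0, hu]
    ring
  rw [heq] at this
  exact this

lemma dot_mulVec_symm (M : Mat n) (hM : M.IsSymm) (a b : Fin n → ℝ) :
    dotProduct a (M.mulVec b) = dotProduct b (M.mulVec a) := by
  rw [Matrix.dotProduct_mulVec a M b, ← Matrix.mulVec_transpose, hM.eq, dotProduct_comm]


lemma arith1 (cc K2 K2p E2 s a α y z : ℝ) (hcc : 0 < cc)
    (hE2cc : E2 * cc = K2 * cc + 2 * K2p ^ 2)
    (hy : |y| ≤ K2 * a ^ 2) (hz : |z| ≤ K2p * a) :
    s ^ 2 * (cc / 2) * α ^ 2 - s ^ 2 * E2 * a ^ 2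
      ≤ -(s ^ 2 * (y + 2 * α * z - α ^ 2 * cc)) := by
  have hyb := abs_le.mp hy
  have hzb := abs_le.mp hz
  have hcore : y + 2 * α * z ≤ cc / 2 * α ^ 2 + E2 * a ^ 2 := by
    have hcoreC : cc * (y + 2 * α * z) ≤ cc * (cc / 2 * α ^ 2 + E2 * a ^ 2) := by
      rcases le_or_gt 0 α with hα | hα
      · have hza : α * z ≤ α * (K2p * a) := mul_le_mul_of_nonneg_left hzb.2 hα
        nlinarith [sq_nonneg (cc * α - 2 * K2p * a),
          mul_le_mul_of_nonneg_left hyb.2 hcc.le,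
          mul_le_mul_of_nonneg_left hza hcc.le]
      · have hza : α * z ≤ α * (-(K2p * a)) := by nlinarith [hzb.1]
        nlinarith [sq_nonneg (cc * α + 2 * K2p * a),
          mul_le_mul_of_nonneg_left hyb.2 hcc.le,
          mul_le_mul_of_nonneg_left hza hcc.le]
    exact le_of_mul_le_mul_left hcoreC hcc
  nlinarith [mul_le_mul_of_nonneg_left hcore (sq_nonneg s)]

lemma arith2 (s : ℝ) (h0 : 0 < |s|) (h1 : |s| ≤ 1) : s ^ 2 ≤ |s| ∧ |s| ^ 3 ≤ |s| := by
  constructor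
  · nlinarith [sq_abs s]
  · calc |s| ^ 3 ≤ |s| ^ 1 := pow_le_pow_of_le_one (abs_nonneg s) h1 (by norm_num)
      _ = |s| := pow_one _

lemma arith3 (ms s K1 E2 K3 δ : ℝ) (h2 : s ^ 2 ≤ ms) (h3 : ms ^ 3 ≤ ms) (h0 : 0 < ms)
    (hK1 : 0 ≤ K1) (hE2 : 0 ≤ E2) (hK3 : 0 ≤ K3)
    (hD : ms * (K1 + E2 + K3 + 1) ≤ δ / 2) :
    ms * K1 + s ^ 2 * E2 + ms ^ 3 * K3 ≤ δ / 2 := by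
  nlinarith [mul_le_mul_of_nonneg_right h2 hE2, mul_le_mul_of_nonneg_right h3 hK3]

lemma arith4 (ms s K3 nv2 cc : ℝ) (hms : ms = |s|) (h0 : 0 < ms)
    (hK3nv : 0 ≤ K3 * nv2) (h2 : ms * (K3 * nv2 + 1) ≤ cc / 4) :
    ms ^ 3 * K3 * nv2 ≤ s ^ 2 * (cc / 4) := by
  have hmssq : ms ^ 2 = s ^ 2 := by rw [hms, sq_abs]
  have h3 : ms * (K3 * nv2) ≤ cc / 4 := by nlinarith
  calc ms ^ 3 * K3 * nv2 = ms ^ 2 * (ms * (K3 * nv2)) := by ring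
    _ ≤ ms ^ 2 * (cc / 4) := mul_le_mul_of_nonneg_left h3 (sq_nonneg ms)
    _ = s ^ 2 * (cc / 4) := by rw [hmssq]

lemma arith5 (δ cc s ms K1 E2 K3 nv2 a α T0 T1 T2 TT : ℝ)
    (hms : ms = |s|) (hδ : 0 < δ) (hcc : 0 < cc) (h0ms : 0 < ms)
    (ha : 0 ≤ a) (hnv2 : 0 ≤ nv2)
    (h0 : δ * a ^ 2 ≤ T0)
    (h1 : s ^ 1 * T1 ≤ ms * (K1 * a ^ 2))
    (h2 : s ^ 2 * (cc / 2) * α ^ 2 - s ^ 2 * E2 * a ^ 2 ≤ -(s ^ 2 * T2))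
    (h4 : TT ≤ ms ^ 3 * K3 * (a ^ 2 + α ^ 2 * nv2))
    (hcoef1 : ms * K1 + s ^ 2 * E2 + ms ^ 3 * K3 ≤ δ / 2)
    (hcoef2 : ms ^ 3 * K3 * nv2 ≤ s ^ 2 * (cc / 4))
    (hpos : 0 < a ∨ α ≠ 0) :
    0 < T0 - s ^ 1 * T1 - s ^ 2 * T2 - TT := by
  have hssq : s ^ 2 = ms ^ 2 := by rw [hms, sq_abs]
  have P1 : (ms * K1 + s ^ 2 * E2 + ms ^ 3 * K3) * a ^ 2 ≤ δ / 2 * a ^ 2 :=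
    mul_le_mul_of_nonneg_right hcoef1 (sq_nonneg a)
  have P2 : ms ^ 3 * K3 * nv2 * α ^ 2 ≤ s ^ 2 * (cc / 4) * α ^ 2 :=
    mul_le_mul_of_nonneg_right hcoef2 (sq_nonneg α)
  have hstep : δ / 2 * a ^ 2 + s ^ 2 * (cc / 4) * α ^ 2
      ≤ T0 - s ^ 1 * T1 - s ^ 2 * T2 - TT := by nlinarith [h0, h1, h2, h4, P1, P2]
  have hfin : 0 < δ / 2 * a ^ 2 + s ^ 2 * (cc / 4) * α ^ 2 := by
    rcases hpos with h | h
    · have h1' : 0 < δ / 2 * a ^ 2 := by positivity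
      have h2' : 0 ≤ s ^ 2 * (cc / 4) * α ^ 2 := by positivity
      linarith
    · have hα2 : 0 < α ^ 2 := by positivity
      have hs2 : 0 < s ^ 2 := by
        rw [hssq]; positivity
      have : 0 < s ^ 2 * (cc / 4) * α ^ 2 := by positivity
      have h1' : 0 ≤ δ / 2 * a ^ 2 := by positivity
      linarith
  linarith

set_option maxHeartbeats 1000000 in
lemma key_lemma (hn : 0 < n) (N : ℕ) (hN3 : 3 ≤ N) (c : ℕ → Mat n) (A : Mat n)
    (hcs : ∀ k, (c k).IsSymm) (hAs : A.IsSymm)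
    (v : Fin n → ℝ) (hv : v ≠ 0)
    (hM0v : (A - c 0).mulVec v = 0)
    (hpsd : (A - c 0).PosSemidef)
    (hker : ∀ w, (A - c 0).mulVec w = 0 → ∃ s : ℝ, w = s • v)
    (hc1 : (c 1).mulVec v = 0)
    (hc2 : dotProduct ((c 2).mulVec v) v < 0) :
    ∃ t : ℝ, 0 < t ∧ ∀ s : ℝ, |s| = t →
      (A - ∑ k ∈ Finset.range N, s ^ k • c k).PosDef := by
  classical
  obtain ⟨δ, hδ, hgap⟩ := gap_lemma hn (A - c 0) hpsd v hv hker
  choose K hK0 hK using fun k => exists_dot_bound (c k)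
  set cc : ℝ := - dotProduct ((c 2).mulVec v) v with hcc_def
  have hccpos : 0 < cc := by simp only [hcc_def]; linarith
  set nv : ℝ := ‖toE v‖ with hnv_def
  have hnvpos : 0 < nv := by
    rw [hnv_def]
    refine norm_pos_iff.mpr ?_
    intro h; apply hv
    have := congrArg (WithLp.equiv 2 (Fin n → ℝ)) h
    simpa using this
  set K2' : ℝ := K 2 * nv with hK2'_def
  have hK2'0 : 0 ≤ K2' := mul_nonneg (hK0 2) hnvpos.le
  set E2 : ℝ := K 2 + 2 * K2' ^ 2 / cc with hE2_def
  have hE20 : 0 ≤ E2 := by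
    have : 0 ≤ 2 * K2' ^ 2 / cc := by positivity
    have := hK0 2; simp only [hE2_def]; linarith
  set K3 : ℝ := ∑ k ∈ Finset.range N, K k with hK3_def
  have hK30 : 0 ≤ K3 := Finset.sum_nonneg fun k _ => hK0 k
  set D : ℝ := K 1 + E2 + K3 + 1 with hD_def
  have hD0 : 0 < D := by have := hK0 1; simp only [hD_def]; linarith
  set t : ℝ := min 1 (min (δ / (2 * D)) (cc / (4 * (K3 * nv ^ 2 + 1)))) with ht_def
  have ht0 : 0 < t := by
    refine lt_min one_pos (lt_min ?_ ?_) <;> positivity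
  refine ⟨t, ht0, fun s hs => ?_⟩
  have hs1 : |s| ≤ 1 := by rw [hs]; exact min_le_left _ _
  have hsδ : |s| * D ≤ δ / 2 := by
    have h1 : |s| ≤ δ / (2 * D) := hs ▸ (min_le_right _ _).trans (min_le_left _ _)
    calc |s| * D ≤ (δ / (2 * D)) * D := mul_le_mul_of_nonneg_right h1 hD0.le
      _ = δ / 2 := by field_simp
  have hscc : |s| * (K3 * nv ^ 2 + 1) ≤ cc / 4 := by
    have h1 : |s| ≤ cc / (4 * (K3 * nv ^ 2 + 1)) :=
      hs ▸ (min_le_right _ _).trans (min_le_right _ _)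
    have h2 : (0:ℝ) < K3 * nv ^ 2 + 1 := by positivity
    calc |s| * (K3 * nv ^ 2 + 1) ≤ (cc / (4 * (K3 * nv ^ 2 + 1))) * (K3 * nv ^ 2 + 1) :=
          mul_le_mul_of_nonneg_right h1 h2.le
      _ = cc / 4 := by field_simp
  -- Hermitian part
  have hsymm : (A - ∑ k ∈ Finset.range N, s ^ k • c k).IsSymm := by
    rw [Matrix.IsSymm, Matrix.transpose_sub, Matrix.transpose_sum, hAs.eq]
    congr 1
    exact Finset.sum_congr rfl fun k _ => by rw [Matrix.transpose_smul, (hcs k).eq]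
  rw [Matrix.posDef_iff_dotProduct_mulVec]
  constructor
  · rw [Matrix.IsHermitian, Matrix.conjTranspose_eq_transpose_of_trivial, hsymm.eq]
  intro w hw
  rw [star_trivial]
  -- decomposition
  set α : ℝ := dotProduct w v / nv ^ 2 with hα_def
  set u : Fin n → ℝ := w - α • v with hu_def
  have hvv : dotProduct v v = nv ^ 2 := (norm_toE_sq v).symm
  have huv : dotProduct u v = 0 := by
    rw [hu_def, sub_dotProduct, smul_dotProduct, hvv, hα_def, smul_eq_mul]
    field_simp
    ring
  have hwuv : w = u + α • v := by rw [hu_def]; abel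
  set a : ℝ := ‖toE u‖ with ha_def
  have ha0 : 0 ≤ a := norm_nonneg _
  have huu : dotProduct u u = a ^ 2 := (norm_toE_sq u).symm
  have hww : dotProduct w w = a ^ 2 + α ^ 2 * nv ^ 2 := by
    rw [hwuv]
    rw [add_dotProduct, dotProduct_add, dotProduct_add,
      smul_dotProduct, dotProduct_smul, smul_dotProduct,
      dotProduct_smul, huu, hvv, dotProduct_comm v u, huv]
    simp only [smul_eq_mul]
    ring
  have hw2 : ‖toE w‖ ^ 2 = a ^ 2 + α ^ 2 * nv ^ 2 := by rw [norm_toE_sq, hww]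
  -- quadratic form decomposition
  have hsplit : ∑ k ∈ Finset.range N, s ^ k • c k
      = c 0 + s ^ 1 • c 1 + s ^ 2 • c 2 + ∑ k ∈ Finset.Ico 3 N, s ^ k • c k := by
    rw [Finset.range_eq_Ico,
      Finset.sum_eq_sum_Ico_succ_bot (by omega : 0 < N),
      Finset.sum_eq_sum_Ico_succ_bot (by omega : 1 < N),
      Finset.sum_eq_sum_Ico_succ_bot (by omega : 2 < N), pow_zero, one_smul]
    abel
  have hqf : dotProduct w ((A - ∑ k ∈ Finset.range N, s ^ k • c k).mulVec w)
      = dotProduct w ((A - c 0).mulVec w)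
        - s ^ 1 * dotProduct w ((c 1).mulVec w)
        - s ^ 2 * dotProduct w ((c 2).mulVec w)
        - ∑ k ∈ Finset.Ico 3 N, s ^ k * dotProduct w ((c k).mulVec w) := by
    rw [hsplit]
    have : A - (c 0 + s ^ 1 • c 1 + s ^ 2 • c 2 + ∑ k ∈ Finset.Ico 3 N, s ^ k • c k)
        = (A - c 0) - s ^ 1 • c 1 - s ^ 2 • c 2 - ∑ k ∈ Finset.Ico 3 N, s ^ k • c k := by
      abel
    rw [this]
    rw [Matrix.sub_mulVec, Matrix.sub_mulVec, Matrix.sub_mulVec,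
      dotProduct_sub, dotProduct_sub, dotProduct_sub]
    congr 2
    · rw [Matrix.smul_mulVec, dotProduct_smul, smul_eq_mul]
    · rw [Matrix.smul_mulVec, dotProduct_smul, smul_eq_mul]
    · induction (Finset.Ico 3 N) using Finset.induction with
      | empty => simp
      | insert _ _ h ih =>
          rw [Finset.sum_insert h, Finset.sum_insert h, Matrix.add_mulVec,
            dotProduct_add, ih, Matrix.smul_mulVec,
            dotProduct_smul, smul_eq_mul]
  have hM0s : (A - c 0).IsSymm := by
    rw [Matrix.IsSymm, Matrix.transpose_sub, hAs.eq, (hcs 0).eq]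
  -- term 0
  have hterm0 : δ * a ^ 2 ≤ dotProduct w ((A - c 0).mulVec w) := by
    have h1 : (A - c 0).mulVec w = (A - c 0).mulVec u := by
      rw [hwuv, Matrix.mulVec_add, Matrix.mulVec_smul, hM0v, smul_zero, add_zero]
    rw [h1, hwuv, add_dotProduct, smul_dotProduct,
      dot_mulVec_symm _ hM0s v u, hM0v, dotProduct_zero, smul_eq_mul, mul_zero, add_zero,
      dotProduct_comm]
    exact hgap u huv
  -- term 1
  have hterm1 : |dotProduct w ((c 1).mulVec w)| ≤ K 1 * a ^ 2 := by
    have h1 : (c 1).mulVec w = (c 1).mulVec u := by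
      rw [hwuv, Matrix.mulVec_add, Matrix.mulVec_smul, hc1, smul_zero, add_zero]
    rw [h1, hwuv, add_dotProduct, smul_dotProduct,
      dot_mulVec_symm _ (hcs 1) v u, hc1, dotProduct_zero, smul_eq_mul, mul_zero,
      add_zero, dotProduct_comm]
    calc |dotProduct ((c 1).mulVec u) u| ≤ K 1 * ‖toE u‖ * ‖toE u‖ := hK 1 u u
      _ = K 1 * a ^ 2 := by rw [← ha_def]; ring
  -- term 2
  have hE2cc : E2 * cc = K 2 * cc + 2 * K2' ^ 2 := by
    rw [hE2_def]; field_simp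
  have hterm2 : s ^ 2 * (cc / 2) * α ^ 2 - s ^ 2 * E2 * a ^ 2
      ≤ - (s ^ 2 * dotProduct w ((c 2).mulVec w)) := by
    have hdec : dotProduct w ((c 2).mulVec w)
        = dotProduct u ((c 2).mulVec u)
          + 2 * α * dotProduct u ((c 2).mulVec v) - α ^ 2 * cc := by
      have hvcv : dotProduct v ((c 2).mulVec v) = -cc := by
        rw [hcc_def, dotProduct_comm]; ring
      rw [hwuv, Matrix.mulVec_add, Matrix.mulVec_smul, add_dotProduct,
        dotProduct_add, dotProduct_add, smul_dotProduct,
        smul_dotProduct, dotProduct_smul, dotProduct_smul,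
        dot_mulVec_symm _ (hcs 2) v u, hvcv]
      simp only [smul_eq_mul]
      ring
    have hy : |dotProduct u ((c 2).mulVec u)| ≤ K 2 * a ^ 2 := by
      rw [dotProduct_comm]
      calc |dotProduct ((c 2).mulVec u) u| ≤ K 2 * ‖toE u‖ * ‖toE u‖ := hK 2 u u
        _ = K 2 * a ^ 2 := by rw [← ha_def]; ring
    have hz : |dotProduct u ((c 2).mulVec v)| ≤ K2' * a := by
      rw [dotProduct_comm, hK2'_def]
      exact hK 2 v u
    rw [hdec]
    exact arith1 cc (K 2) K2' E2 s a α _ _ hccpos hE2cc hy hz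
  -- tail
  have hwnorm : ‖toE w‖ * ‖toE w‖ = a ^ 2 + α ^ 2 * nv ^ 2 := by
    rw [← hw2]; ring
  have htail : |∑ k ∈ Finset.Ico 3 N, s ^ k * dotProduct w ((c k).mulVec w)|
      ≤ |s| ^ 3 * K3 * (a ^ 2 + α ^ 2 * nv ^ 2) := by
    calc |∑ k ∈ Finset.Ico 3 N, s ^ k * dotProduct w ((c k).mulVec w)|
        ≤ ∑ k ∈ Finset.Ico 3 N, |s ^ k * dotProduct w ((c k).mulVec w)| :=
          Finset.abs_sum_le_sum_abs _ _
      _ ≤ ∑ k ∈ Finset.Ico 3 N, |s| ^ 3 * (K k * (a ^ 2 + α ^ 2 * nv ^ 2)) := by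
          refine Finset.sum_le_sum fun k hk => ?_
          obtain ⟨hk3, hkN⟩ := Finset.mem_Ico.mp hk
          rw [abs_mul, abs_pow]
          have h1 : |s| ^ k ≤ |s| ^ 3 := pow_le_pow_of_le_one (abs_nonneg s) hs1 hk3
          have h2 : |dotProduct w ((c k).mulVec w)| ≤ K k * (a ^ 2 + α ^ 2 * nv ^ 2) := by
            rw [dotProduct_comm]
            calc |dotProduct ((c k).mulVec w) w| ≤ K k * ‖toE w‖ * ‖toE w‖ := hK k w w
              _ = K k * (a ^ 2 + α ^ 2 * nv ^ 2) := by rw [mul_assoc, hwnorm]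
          calc |s| ^ k * |dotProduct w ((c k).mulVec w)|
              ≤ |s| ^ 3 * |dotProduct w ((c k).mulVec w)| :=
                mul_le_mul_of_nonneg_right h1 (abs_nonneg _)
            _ ≤ |s| ^ 3 * (K k * (a ^ 2 + α ^ 2 * nv ^ 2)) :=
                mul_le_mul_of_nonneg_left h2 (by positivity)
      _ = (∑ k ∈ Finset.Ico 3 N, K k) * (|s| ^ 3 * (a ^ 2 + α ^ 2 * nv ^ 2)) := by
          rw [Finset.sum_mul]
          exact Finset.sum_congr rfl fun k _ => by ring
      _ ≤ K3 * (|s| ^ 3 * (a ^ 2 + α ^ 2 * nv ^ 2)) := by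
          refine mul_le_mul_of_nonneg_right ?_ (by positivity)
          rw [hK3_def]
          refine Finset.sum_le_sum_of_subset_of_nonneg ?_ (fun k _ _ => hK0 k)
          intro k hk
          obtain ⟨_, hkN⟩ := Finset.mem_Ico.mp hk
          exact Finset.mem_range.mpr hkN
      _ = |s| ^ 3 * K3 * (a ^ 2 + α ^ 2 * nv ^ 2) := by ring
  -- assemble
  rw [hqf]
  have habs : 0 < |s| := hs ▸ ht0
  obtain ⟨h_s2, h_s3⟩ := arith2 s habs hs1
  have hA2 : s ^ 1 * dotProduct w ((c 1).mulVec w) ≤ |s| * (K 1 * a ^ 2) := by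
    calc s ^ 1 * dotProduct w ((c 1).mulVec w)
        ≤ |s ^ 1 * dotProduct w ((c 1).mulVec w)| := le_abs_self _
      _ = |s| * |dotProduct w ((c 1).mulVec w)| := by rw [abs_mul, pow_one]
      _ ≤ |s| * (K 1 * a ^ 2) := mul_le_mul_of_nonneg_left hterm1 (abs_nonneg s)
  have hA4 : ∑ k ∈ Finset.Ico 3 N, s ^ k * dotProduct w ((c k).mulVec w)
      ≤ |s| ^ 3 * K3 * (a ^ 2 + α ^ 2 * nv ^ 2) := (le_abs_self _).trans htail
  have hcoef1 : |s| * K 1 + s ^ 2 * E2 + |s| ^ 3 * K3 ≤ δ / 2 := by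
    refine arith3 |s| s (K 1) E2 K3 δ h_s2 h_s3 habs (hK0 1) hE20 hK30 ?_
    rw [← hD_def]; exact hsδ
  have hcoef2 : |s| ^ 3 * K3 * nv ^ 2 ≤ s ^ 2 * (cc / 4) :=
    arith4 |s| s K3 (nv ^ 2) cc rfl habs (by positivity) hscc
  have hw0 : 0 < a ∨ α ≠ 0 := by
    by_contra h
    push_neg at h
    obtain ⟨h1, h2⟩ := h
    have ha' : a = 0 := le_antisymm h1 ha0
    apply hw
    have hu0 : u = 0 := by
      have h3 : toE u = 0 := by
        rw [ha_def] at ha'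
        exact norm_eq_zero.mp ha'
      have := congrArg (WithLp.equiv 2 (Fin n → ℝ)) h3
      simpa using this
    rw [hwuv, hu0, h2, zero_smul, add_zero]
  exact arith5 δ cc s |s| (K 1) E2 K3 (nv ^ 2) a α _ _ _ _ rfl hδ hccpos habs ha0
    (by positivity) hterm0 hA2 hterm2 hA4 hcoef1 hcoef2 hw0

/-- if `X` is in the boundary of `D(A)`, `v ≠ 0`, `Av = p(X)v` and the kernel of
`A − p(X)` is one dimensional, then there is a subspace of the clamped tangent plane `T(X,v)`
of codimension at most one (cut out from `T(X,v)` by a linear functional `Λ`) on which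
`⟨p″(X)[H]v, v⟩ ≥ 0`. -/
theorem stmt_11 (g n : ℕ) (hn : 0 < n) (p : FreeAlgebra ℝ (Fin g))
    (hsym : star p = p) (hqc : IsQuasiConvex p)
    (A : Matrix (Fin n) (Fin n) ℝ) (hA : A.PosDef)
    (X : {Y : Fin g → Matrix (Fin n) (Fin n) ℝ // ∀ j, (Y j).IsSymm})
    (hbd : X ∈ frontier {Y : {Y : Fin g → Matrix (Fin n) (Fin n) ℝ // ∀ j, (Y j).IsSymm} |
        (A - evalMat p Y.1).PosDef})
    (v : Fin n → ℝ) (hv : v ≠ 0) (heig : A.mulVec v = (evalMat p X.1).mulVec v)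
    (hker : Module.finrank ℝ (LinearMap.ker (A - evalMat p X.1).mulVecLin) = 1) :
    ∃ L : (Fin g → Matrix (Fin n) (Fin n) ℝ) →ₗ[ℝ] ℝ,
      ∀ H : Fin g → Matrix (Fin n) (Fin n) ℝ, (∀ j, (H j).IsSymm) →
        (derivEval p X.1 H).mulVec v = 0 → L H = 0 →
        0 ≤ dotProduct ((hessEval p X.1 H).mulVec v) v := by
  classical
  refine ⟨0, fun H hHsym hderiv _ => ?_⟩
  by_contra hneg
  rw [not_le] at hneg
  set q : Polynomial (Mat n) :=
    FreeAlgebra.lift ℝ (fun j => C (X.1 j) + Polynomial.X * C (H j)) p with hq_def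
  set c : ℕ → Mat n := fun k => q.coeff k with hc_def
  set N : ℕ := q.natDegree + 3 with hN_def
  have hc0 : c 0 = evalMat p X.1 := by
    rw [hc_def]; exact coeff_zero_eq X.1 H p
  have hc1 : (c 1).mulVec v = 0 := by
    have : c 1 = derivEval p X.1 H := rfl
    rw [this]; exact hderiv
  have hc2 : dotProduct ((c 2).mulVec v) v < 0 := by
    have h1 : hessEval p X.1 H = (2:ℝ) • c 2 := rfl
    rw [h1, Matrix.smul_mulVec, smul_dotProduct, smul_eq_mul] at hneg
    linarith
  have hcs : ∀ k, (c k).IsSymm := by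
    intro k
    have := coeff_lift_transpose X.1 H X.2 hHsym p k
    rw [hsym] at this
    exact this
  have hAs : A.IsSymm := by
    have h2 : Aᴴ = A := hA.1
    rwa [Matrix.conjTranspose_eq_transpose_of_trivial] at h2
  have hM0v : (A - c 0).mulVec v = 0 := by
    rw [hc0, Matrix.sub_mulVec, heig, sub_self]
  have hM0s : (A - c 0).IsSymm := by
    rw [Matrix.IsSymm, Matrix.transpose_sub, hAs.eq, (hcs 0).eq]
  have hpsd : (A - c 0).PosSemidef := by
    rw [Matrix.posSemidef_iff_dotProduct_mulVec]
    constructor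
    · show (A - c 0)ᴴ = A - c 0
      rw [Matrix.conjTranspose_eq_transpose_of_trivial, hM0s.eq]
    · intro x
      rw [star_trivial]
      have hXcl : X ∈ closure {Y : {Y : Fin g → Matrix (Fin n) (Fin n) ℝ // ∀ j, (Y j).IsSymm} |
          (A - evalMat p Y.1).PosDef} := frontier_subset_closure hbd
      set F : {Y : Fin g → Matrix (Fin n) (Fin n) ℝ // ∀ j, (Y j).IsSymm} → ℝ :=
        fun Y => dotProduct x ((A - evalMat p Y.1).mulVec x) with hF_def
      have hFcont : Continuous F := by
        have h1 : Continuous fun Y : {Y : Fin g → Matrix (Fin n) (Fin n) ℝ //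
            ∀ j, (Y j).IsSymm} => evalMat p Y.1 := by
          have := (continuous_lift (n := n) p).comp
            (continuous_subtype_val (p := fun Y : Fin g → Matrix (Fin n) (Fin n) ℝ =>
              ∀ j, (Y j).IsSymm))
          exact this
        have h2 : Continuous fun Y : {Y : Fin g → Matrix (Fin n) (Fin n) ℝ //
            ∀ j, (Y j).IsSymm} => A - evalMat p Y.1 := continuous_const.sub h1
        have h3 : Continuous fun M : Mat n => dotProduct x (M.mulVec x) := by
          simp only [dotProduct, Matrix.mulVec]
          refine continuous_finset_sum _ fun i _ => ?_
          refine continuous_const.mul ?_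
          refine continuous_finset_sum _ fun j _ => ?_
          exact ((continuous_id.matrix_elem i j).mul continuous_const)
        exact h3.comp h2
      have hsub : {Y : {Y : Fin g → Matrix (Fin n) (Fin n) ℝ // ∀ j, (Y j).IsSymm} |
          (A - evalMat p Y.1).PosDef} ⊆ F ⁻¹' Set.Ici 0 := by
        intro Y hY
        have := hY.posSemidef.dotProduct_mulVec_nonneg x
        rw [star_trivial] at this
        exact this
      have hclosed : IsClosed (F ⁻¹' Set.Ici 0) := isClosed_Ici.preimage hFcont
      have := closure_minimal hsub hclosed hXcl
      rw [hc0]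
      exact this
  have hkerv : ∀ w, (A - c 0).mulVec w = 0 → ∃ s : ℝ, w = s • v := by
    intro w hw
    set Ker := LinearMap.ker (A - evalMat p X.1).mulVecLin with hKer_def
    have hvK : v ∈ Ker := by
      rw [hKer_def, LinearMap.mem_ker, Matrix.mulVecLin_apply, ← hc0, hM0v]
    have hle : Submodule.span ℝ {v} ≤ Ker := by
      rw [Submodule.span_singleton_le_iff_mem]; exact hvK
    have hfr : Module.finrank ℝ (Submodule.span ℝ {v}) = 1 := finrank_span_singleton hv
    have heq : Submodule.span ℝ {v} = Ker := by
      refine Submodule.eq_of_le_of_finrank_le hle ?_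
      rw [hfr, hker]
    have hwK : w ∈ Ker := by
      rw [hKer_def, LinearMap.mem_ker, Matrix.mulVecLin_apply, ← hc0]
      exact hw
    rw [← heq] at hwK
    obtain ⟨s, hs⟩ := Submodule.mem_span_singleton.mp hwK
    exact ⟨s, hs.symm⟩
  obtain ⟨t, ht0, hpd⟩ := key_lemma hn N (by omega) c A hcs hAs v hv hM0v hpsd hkerv hc1 hc2
  have hEs : ∀ s : ℝ, evalMat p (fun j => X.1 j + s • H j)
      = ∑ k ∈ Finset.range N, s ^ k • c k := by
    intro s
    show FreeAlgebra.lift ℝ (fun j => X.1 j + s • H j) p = _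
    rw [lift_add_smul_eq_eval₂ X.1 H s p, ← hq_def,
      eval₂_eq_sum_smul s q (by omega : q.natDegree < N)]
  have hconv := hqc.2 n hn A hA
  set xp : Fin g → Matrix (Fin n) (Fin n) ℝ := fun j => X.1 j + t • H j with hxp_def
  set xm : Fin g → Matrix (Fin n) (Fin n) ℝ := fun j => X.1 j + (-t) • H j with hxm_def
  have hsymt : ∀ (s : ℝ) j, (X.1 j + s • H j).IsSymm := by
    intro s j
    rw [Matrix.IsSymm, Matrix.transpose_add, Matrix.transpose_smul, (X.2 j).eq, (hHsym j).eq]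
  have hmemp : xp ∈ {Z : Fin g → Matrix (Fin n) (Fin n) ℝ |
      (∀ j, (Z j).IsSymm) ∧ (A - evalMat p Z).PosDef} := by
    refine ⟨fun j => hsymt t j, ?_⟩
    rw [hxp_def, hEs t]
    exact hpd t (abs_of_pos ht0)
  have hmemm : xm ∈ {Z : Fin g → Matrix (Fin n) (Fin n) ℝ |
      (∀ j, (Z j).IsSymm) ∧ (A - evalMat p Z).PosDef} := by
    refine ⟨fun j => hsymt (-t) j, ?_⟩
    rw [hxm_def, hEs (-t)]
    exact hpd (-t) (by rw [abs_neg, abs_of_pos ht0])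
  have hmid := hconv hmemp hmemm (by norm_num : (0:ℝ) ≤ 1/2) (by norm_num : (0:ℝ) ≤ 1/2)
    (by norm_num : (1:ℝ)/2 + 1/2 = 1)
  have hmid_eq : (1/2 : ℝ) • xp + (1/2 : ℝ) • xm = X.1 := by
    funext j
    show (1/2 : ℝ) • (X.1 j + t • H j) + (1/2 : ℝ) • (X.1 j + (-t) • H j) = X.1 j
    module
  rw [hmid_eq] at hmid
  obtain ⟨-, hposdef⟩ := hmid
  have h0 : (A - evalMat p X.1).mulVec v = 0 := by
    rw [Matrix.sub_mulVec, heig, sub_self]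
  have := (Matrix.posDef_iff_dotProduct_mulVec.mp hposdef).2 hv
  rw [star_trivial, h0, dotProduct_zero] at this
  exact lt_irrefl 0 this
end
end

section
/- Let p ∈ ℝ⟨x⟩ be symmetric, let A ∈ 𝕊ₙ(ℝ) be positive definite, suppose A − p(X) is positive semidefinite and v is a nonzero vector with (A − p(X))v = 0. Then for each ε > 0 there exists a positive definite A_ε ∈ 𝕊ₙ(ℝ) with ‖A − A_ε‖ < ε such that A_ε − p(X) is positive semidefinite and the kernel of A_ε − p(X) is exactly the span of v. -/
open scoped BigOperators

noncomputable section

/-!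
Perturb `A` by `d • Q`, where `Q ⪰ 0` is a multiple of the orthogonal projection onto `vᗮ` and
`d > 0` is small. The kernel of a sum of positive semidefinite matrices is the intersection of
their kernels, so the kernel of `A + d • Q - p(X)` is `ker (A - p(X)) ∩ span {v} = span {v}`.
-/

open Matrix

namespace Matrix

variable {ι : Type*} [Fintype ι]

open scoped ComplexOrder in
theorem ker_mulVecLin_add_of_posSemidef {𝕜 : Type*} [RCLike 𝕜] {S T : Matrix ι ι 𝕜}
    (hS : S.PosSemidef) (hT : T.PosSemidef) :
    LinearMap.ker (S + T).mulVecLin = LinearMap.ker S.mulVecLin ⊓ LinearMap.ker T.mulVecLin := by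
  ext w
  simp only [Submodule.mem_inf, LinearMap.mem_ker, mulVecLin_apply]
  refine ⟨fun h => ?_, fun ⟨hSw, hTw⟩ => by rw [add_mulVec, hSw, hTw, add_zero]⟩
  have hsum : star w ⬝ᵥ S *ᵥ w + star w ⬝ᵥ T *ᵥ w = 0 := by
    rw [← dotProduct_add, ← add_mulVec, h, dotProduct_zero]
  obtain ⟨hSw, hTw⟩ := (add_eq_zero_iff_of_nonneg (hS.dotProduct_mulVec_nonneg w)
    (hT.dotProduct_mulVec_nonneg w)).mp hsum
  exact ⟨(hS.dotProduct_mulVec_zero_iff w).mp hSw, (hT.dotProduct_mulVec_zero_iff w).mp hTw⟩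

variable [DecidableEq ι]

/-- `(v ⬝ᵥ v)` times the orthogonal projection onto the hyperplane `vᗮ`. -/
def scaledProjPerp (v : ι → ℝ) : Matrix ι ι ℝ :=
  (v ⬝ᵥ v) • 1 - vecMulVec v v

theorem scaledProjPerp_mulVec (v w : ι → ℝ) :
    scaledProjPerp v *ᵥ w = (v ⬝ᵥ v) • w - (v ⬝ᵥ w) • v := by
  rw [scaledProjPerp, sub_mulVec, smul_mulVec, one_mulVec, vecMulVec_mulVec, op_smul_eq_smul]

theorem posSemidef_scaledProjPerp (v : ι → ℝ) : (scaledProjPerp v).PosSemidef := by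
  refine .of_dotProduct_mulVec_nonneg ?_ fun w => ?_
  · simp [scaledProjPerp, IsHermitian]
  · have cauchySchwarz : (v ⬝ᵥ w) ^ 2 ≤ (v ⬝ᵥ v) * (w ⬝ᵥ w) := by
      simpa only [dotProduct, sq] using Finset.sum_mul_sq_le_sq_mul_sq Finset.univ v w
    rw [star_trivial, scaledProjPerp_mulVec, dotProduct_sub, dotProduct_smul, dotProduct_smul,
      smul_eq_mul, smul_eq_mul, dotProduct_comm w v]
    nlinarith

theorem ker_mulVecLin_scaledProjPerp {v : ι → ℝ} (hv : v ≠ 0) :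
    LinearMap.ker (scaledProjPerp v).mulVecLin = Submodule.span ℝ {v} := by
  have hvv : v ⬝ᵥ v ≠ 0 := fun h => hv (dotProduct_self_eq_zero.mp h)
  ext w
  rw [LinearMap.mem_ker, mulVecLin_apply, scaledProjPerp_mulVec, sub_eq_zero,
    Submodule.mem_span_singleton]
  constructor
  · intro h
    refine ⟨(v ⬝ᵥ v)⁻¹ * (v ⬝ᵥ w), ?_⟩
    rw [mul_smul, ← h, smul_smul, inv_mul_cancel₀ hvv, one_smul]
  · rintro ⟨a, rfl⟩
    simp only [dotProduct_smul, smul_eq_mul, smul_smul, mul_comm]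

end Matrix

theorem exists_pos_norm_smul_lt {E : Type*} [SeminormedAddCommGroup E] [NormedSpace ℝ E]
    (x : E) {ε : ℝ} (hε : 0 < ε) : ∃ d : ℝ, 0 < d ∧ ‖d • x‖ < ε := by
  have hx : 0 < ‖x‖ + 1 := by positivity
  refine ⟨ε / (‖x‖ + 1), by positivity, ?_⟩
  rw [norm_smul, Real.norm_of_nonneg (by positivity), div_mul_eq_mul_div, div_lt_iff₀ hx]
  nlinarith

theorem stmt_13_general (g n : ℕ) (p : FreeAlgebra ℝ (Fin g))
    (A : Matrix (Fin n) (Fin n) ℝ) (hA : A.PosDef)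
    (X : Fin g → Matrix (Fin n) (Fin n) ℝ)
    (hps : (A - evalMat p X).PosSemidef)
    (v : Fin n → ℝ) (hv : v ≠ 0) (hker : (A - evalMat p X).mulVec v = 0)
    (eps : ℝ) (heps : 0 < eps) :
    ∃ Aeps : Matrix (Fin n) (Fin n) ℝ, Aeps.PosDef ∧
      ‖Matrix.toEuclideanCLM (𝕜 := ℝ) (A - Aeps)‖ < eps ∧
      (Aeps - evalMat p X).PosSemidef ∧
      LinearMap.ker (Aeps - evalMat p X).mulVecLin = Submodule.span ℝ {v} := by
  set Q := scaledProjPerp v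
  obtain ⟨d, hd, hnorm⟩ := exists_pos_norm_smul_lt (toEuclideanCLM (𝕜 := ℝ) Q) heps
  have hdQ : (d • Q).PosSemidef := (posSemidef_scaledProjPerp v).smul hd.le
  have hsplit : A + d • Q - evalMat p X = (A - evalMat p X) + d • Q := by abel
  have hkerQ : LinearMap.ker (d • Q).mulVecLin = Submodule.span ℝ {v} := by
    rw [show (d • Q).mulVecLin = d • Q.mulVecLin from LinearMap.ext (smul_mulVec d Q),
      LinearMap.ker_smul _ _ hd.ne', ker_mulVecLin_scaledProjPerp hv]
  refine ⟨A + d • Q, hA.add_posSemidef hdQ, ?_, hsplit ▸ hps.add hdQ, ?_⟩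
  · rwa [sub_add_cancel_left, map_neg, norm_neg, map_smul]
  · rw [hsplit, ker_mulVecLin_add_of_posSemidef hps hdQ, hkerQ, inf_eq_right,
      Submodule.span_singleton_le_iff_mem]
    exact hker

/-- if `A ≻ 0`, `A − p(X) ⪰ 0` and `(A − p(X))v = 0` with `v ≠ 0`, then for each
`ε > 0` there is a positive definite `A_ε` with `‖A − A_ε‖ < ε` (operator norm), with
`A_ε − p(X) ⪰ 0` and the kernel of `A_ε − p(X)` exactly the span of `v`. -/
theorem stmt_13 (g n : ℕ) (hn : 0 < n) (p : FreeAlgebra ℝ (Fin g)) (hsym : star p = p)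
    (A : Matrix (Fin n) (Fin n) ℝ) (hA : A.PosDef)
    (X : Fin g → Matrix (Fin n) (Fin n) ℝ) (hX : ∀ j, (X j).IsSymm)
    (hps : (A - evalMat p X).PosSemidef)
    (v : Fin n → ℝ) (hv : v ≠ 0) (hker : (A - evalMat p X).mulVec v = 0)
    (eps : ℝ) (heps : 0 < eps) :
    ∃ Aeps : Matrix (Fin n) (Fin n) ℝ, Aeps.PosDef ∧
      ‖Matrix.toEuclideanCLM (𝕜 := ℝ) (A - Aeps)‖ < eps ∧
      (Aeps - evalMat p X).PosSemidef ∧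
      LinearMap.ker (Aeps - evalMat p X).mulVecLin = Submodule.span ℝ {v} :=
  stmt_13_general g n p A hA X hps v hv hker eps heps
end
end
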